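/- arXiv:1605.04982 — 2 statements merged into one kernel-verified Lean document; each statement's English description precedes it below -/
import Mathlib

section
/- Consider a uniform instance and suppose r = W mod Max satisfies 0 < r (i.e., W is not a multiple of Max). Then there exists a feasible allocation x of maximum profit (∑ i, x i = OPT_FBAP) such that: x i ∈ {0, r, Max} for every job i; and the subfamily G1 = {i | x i = r} satisfies (a) no interval [s i, e i) with i ∈ G1 is strictly contained in another interval [s j, e j) with j ∈ G1, and (b) every point t : ℝ is contained in at most 2 of the intervals [s i, e i) with i ∈ G1. -/
open Finset

/-- A feasible allocation (FBAP solution). -/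
def IsAlloc {n : ℕ} (W : ℕ) (s e : Fin n → ℝ) (rmax : Fin n → ℕ)
    (x : Fin n → ℕ) : Prop :=
  (∀ i, x i ≤ rmax i) ∧
  ∀ t : ℝ, ∑ i ∈ Finset.univ.filter (fun i => s i ≤ t ∧ t < e i), x i ≤ W

/-- Profit of an allocation. -/
def allocProfit {n : ℕ} (p : Fin n → ℝ) (x : Fin n → ℕ) : ℝ :=
  ∑ i, p i * x i

set_option maxHeartbeats 1000000

namespace FBAP

variable {n : ℕ}

noncomputable section
open scoped Classical

def load (s e : Fin n → ℝ) (x : Fin n → ℕ) (t : ℝ) : ℕ :=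
  ∑ i ∈ Finset.univ.filter (fun i => s i ≤ t ∧ t < e i), x i

def Feas (s e : Fin n → ℝ) (W Max : ℕ) (x : Fin n → ℕ) : Prop :=
  (∀ i, x i ≤ Max) ∧ ∀ t : ℝ, load s e x t ≤ W

def om (e : Fin n → ℝ) (i : Fin n) : ℕ :=
  (Finset.univ.filter (fun m => e i < e m)).card

section Ctx

variable (s e : Fin n → ℝ) (W Max : ℕ) (x : Fin n → ℕ)

def HBlock : Prop :=
  ∀ i j δ, i ≠ j → 1 ≤ δ → δ ≤ x i → x j + δ ≤ Max →
    (x i < x j + δ ∨ (x i = x j + δ ∧ om e i < om e j)) →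
    ∃ t, (s j ≤ t ∧ t < e j) ∧ ¬(s i ≤ t ∧ t < e i) ∧ W < load s e x t + δ

def HTight : Prop :=
  ∀ j, x j < Max → ∃ t, (s j ≤ t ∧ t < e j) ∧ load s e x t = W

end Ctx

lemma sum_two_update (x : Fin n → ℕ) (i j : Fin n) (hij : i ≠ j) (a b : ℕ)
    (S : Finset (Fin n)) :
    (∑ m ∈ S, (if m = i then a else if m = j then b else x m))
      + (if i ∈ S then x i else 0) + (if j ∈ S then x j else 0)
    = (∑ m ∈ S, x m) + (if i ∈ S then a else 0) + (if j ∈ S then b else 0) := by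
  classical
  by_cases hi : i ∈ S
  · by_cases hj : j ∈ S
    · have hjei : j ∈ S.erase i := Finset.mem_erase.2 ⟨fun h => hij h.symm, hj⟩
      have h1 : ∀ f : Fin n → ℕ, ∑ m ∈ S, f m = f i + (f j + ∑ m ∈ (S.erase i).erase j, f m) := by
        intro f
        rw [← Finset.add_sum_erase _ f hi, ← Finset.add_sum_erase _ f hjei]
      have hcong : ∑ m ∈ (S.erase i).erase j, (if m = i then a else if m = j then b else x m)
          = ∑ m ∈ (S.erase i).erase j, x m := by
        apply Finset.sum_congr rfl
        intro m hm
        have hmj : m ≠ j := (Finset.mem_erase.1 hm).1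
        have hmi : m ≠ i := (Finset.mem_erase.1 (Finset.mem_erase.1 hm).2).1
        simp [hmi, hmj]
      rw [h1 (fun m => if m = i then a else if m = j then b else x m), h1 x, hcong]
      have e1 : (if i = i then a else if i = j then b else x i) = a := by simp
      have e2 : (if j = i then a else if j = j then b else x j) = b := by simp [Ne.symm hij]
      rw [e1, e2, if_pos hi, if_pos hj, if_pos hi, if_pos hj]
      omega
    · have h1 : ∀ f : Fin n → ℕ, ∑ m ∈ S, f m = f i + ∑ m ∈ S.erase i, f m := by
        intro f; rw [← Finset.add_sum_erase _ f hi]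
      have hcong : ∑ m ∈ S.erase i, (if m = i then a else if m = j then b else x m)
          = ∑ m ∈ S.erase i, x m := by
        apply Finset.sum_congr rfl
        intro m hm
        have hmi : m ≠ i := (Finset.mem_erase.1 hm).1
        have hmj : m ≠ j := by rintro rfl; exact hj (Finset.mem_erase.1 hm).2
        simp [hmi, hmj]
      rw [h1 (fun m => if m = i then a else if m = j then b else x m), h1 x, hcong]
      have e1 : (if i = i then a else if i = j then b else x i) = a := by simp
      rw [e1, if_pos hi, if_neg hj, if_pos hi, if_neg hj]
      omega
  · by_cases hj : j ∈ S
    · have h1 : ∀ f : Fin n → ℕ, ∑ m ∈ S, f m = f j + ∑ m ∈ S.erase j, f m := by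
        intro f; rw [← Finset.add_sum_erase _ f hj]
      have hcong : ∑ m ∈ S.erase j, (if m = i then a else if m = j then b else x m)
          = ∑ m ∈ S.erase j, x m := by
        apply Finset.sum_congr rfl
        intro m hm
        have hmj : m ≠ j := (Finset.mem_erase.1 hm).1
        have hmi : m ≠ i := by rintro rfl; exact hi (Finset.mem_erase.1 hm).2
        simp [hmi, hmj]
      rw [h1 (fun m => if m = i then a else if m = j then b else x m), h1 x, hcong]
      have e2 : (if j = i then a else if j = j then b else x j) = b := by simp [Ne.symm hij]
      rw [e2, if_neg hi, if_pos hj, if_neg hi, if_pos hj]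
      omega
    · have hcong : ∑ m ∈ S, (if m = i then a else if m = j then b else x m)
          = ∑ m ∈ S, x m := by
        apply Finset.sum_congr rfl
        intro m hm
        have hmi : m ≠ i := by rintro rfl; exact hi hm
        have hmj : m ≠ j := by rintro rfl; exact hj hm
        simp [hmi, hmj]
      simp [hi, hj, hcong]

lemma sum_one_update (x : Fin n → ℕ) (j : Fin n) (b : ℕ) (S : Finset (Fin n)) :
    (∑ m ∈ S, (if m = j then b else x m)) + (if j ∈ S then x j else 0)
    = (∑ m ∈ S, x m) + (if j ∈ S then b else 0) := by
  classical
  by_cases hj : j ∈ S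
  · have h1 : ∀ f : Fin n → ℕ, ∑ m ∈ S, f m = f j + ∑ m ∈ S.erase j, f m := by
      intro f; rw [← Finset.add_sum_erase _ f hj]
    have hcong : ∑ m ∈ S.erase j, (if m = j then b else x m) = ∑ m ∈ S.erase j, x m := by
      apply Finset.sum_congr rfl
      intro m hm
      simp [(Finset.mem_erase.1 hm).1]
    rw [h1 (fun m => if m = j then b else x m), h1 x, hcong]
    have e2 : (if j = j then b else x j) = b := by simp
    rw [e2, if_pos hj, if_pos hj]
    omega
  · have hcong : ∑ m ∈ S, (if m = j then b else x m) = ∑ m ∈ S, x m := by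
      apply Finset.sum_congr rfl
      intro m hm
      have : m ≠ j := by rintro rfl; exact hj hm
      simp [this]
    simp [hj, hcong]

lemma exists_good (s e : Fin n → ℝ) (W Max : ℕ) (hMax1 : 1 ≤ Max) :
    ∃ x : Fin n → ℕ, Feas s e W Max x ∧
      (∀ y, Feas s e W Max y → ∑ i, y i ≤ ∑ i, x i) ∧
      HTight s e W Max x ∧ HBlock s e W Max x := by
  classical
  set M2 : ℕ := n * (Max * n) + 1 with hM2
  set M1 : ℕ := n * (Max * Max) + 1 with hM1
  set K : (Fin n → ℕ) → ℕ :=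
    fun f => ((∑ i, f i) * M1 + ∑ i, f i * f i) * M2 + ∑ i, f i * om e i with hK
  set T0 : Finset (Fin n → ℕ) :=
    Finset.image (fun f : Fin n → Fin (Max + 1) => fun i => (f i : ℕ)) Finset.univ with hT0
  have hmemT0 : ∀ y : Fin n → ℕ, (∀ i, y i ≤ Max) → y ∈ T0 := by
    intro y hy
    refine Finset.mem_image.2 ⟨fun i => ⟨y i, Nat.lt_succ_of_le (hy i)⟩, Finset.mem_univ _, ?_⟩
    funext i; rfl
  set S : Finset (Fin n → ℕ) := T0.filter (fun f => Feas s e W Max f) with hS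
  have hzero : (fun _ : Fin n => 0) ∈ S := by
    refine Finset.mem_filter.2 ⟨hmemT0 _ (fun i => Nat.zero_le _), ?_, ?_⟩
    · intro i; exact Nat.zero_le _
    · intro t; simp [load]
  obtain ⟨x, hxS, hxmax⟩ := S.exists_max_image K ⟨_, hzero⟩
  have hxF : Feas s e W Max x := (Finset.mem_filter.1 hxS).2
  have hmax : ∀ y, Feas s e W Max y → K y ≤ K x := by
    intro y hy
    exact hxmax y (Finset.mem_filter.2 ⟨hmemT0 y hy.1, hy⟩)
  have hsq_bound : ∀ y, Feas s e W Max y → (∑ i, y i * y i) < M1 := by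
    intro y hy
    have : ∑ i, y i * y i ≤ ∑ _i : Fin n, Max * Max :=
      Finset.sum_le_sum (fun i _ => Nat.mul_le_mul (hy.1 i) (hy.1 i))
    simp only [Finset.sum_const, Finset.card_univ, Fintype.card_fin, smul_eq_mul] at this
    omega
  have hom_bound : ∀ i, om e i ≤ n := by
    intro i
    have := Finset.card_filter_le (Finset.univ : Finset (Fin n)) (fun m => e i < e m)
    simpa [om] using this
  have hpsi_bound : ∀ y, Feas s e W Max y → (∑ i, y i * om e i) < M2 := by
    intro y hy
    have : ∑ i, y i * om e i ≤ ∑ _i : Fin n, Max * n :=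
      Finset.sum_le_sum (fun i _ => Nat.mul_le_mul (hy.1 i) (hom_bound i))
    simp only [Finset.sum_const, Finset.card_univ, Fintype.card_fin, smul_eq_mul] at this
    omega
  refine ⟨x, hxF, ?_, ?_, ?_⟩
  · -- optimality
    intro y hy
    by_contra hlt
    push_neg at hlt
    have hKy := hmax y hy
    have h1 : ∑ i, x i + 1 ≤ ∑ i, y i := hlt
    have hsx := hsq_bound x hxF
    have hpx := hpsi_bound x hxF
    have hstep1 : K x < ((∑ i, x i) * M1 + M1) * M2 := by
      have hA : (∑ i, x i) * M1 + (∑ i, x i * x i) + 1 ≤ (∑ i, x i) * M1 + M1 := by omega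
      have hB : ((∑ i, x i) * M1 + ∑ i, x i * x i + 1) * M2 ≤ ((∑ i, x i) * M1 + M1) * M2 :=
        Nat.mul_le_mul_right _ hA
      have hC : ((∑ i, x i) * M1 + ∑ i, x i * x i) * M2 + M2
          = ((∑ i, x i) * M1 + ∑ i, x i * x i + 1) * M2 := by ring
      have hKx : K x = ((∑ i, x i) * M1 + ∑ i, x i * x i) * M2 + ∑ i, x i * om e i := rfl
      omega
    have hstep2 : ((∑ i, x i) * M1 + M1) * M2 ≤ K y := by
      have hA : ((∑ i, x i) + 1) * M1 ≤ (∑ i, y i) * M1 := Nat.mul_le_mul_right _ h1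
      have hB : ((∑ i, x i) + 1) * M1 = (∑ i, x i) * M1 + M1 := by ring
      have hC : ((∑ i, x i) * M1 + M1) * M2 ≤ ((∑ i, y i) * M1 + ∑ i, y i * y i) * M2 :=
        Nat.mul_le_mul_right _ (by omega)
      have hKy2 : K y = ((∑ i, y i) * M1 + ∑ i, y i * y i) * M2 + ∑ i, y i * om e i := rfl
      omega
    omega
  · -- HTight
    intro j hj
    by_contra hc
    push_neg at hc
    set y : Fin n → ℕ := fun m => if m = j then x j + 1 else x m with hy
    have hyval : ∀ m, y m = if m = j then x j + 1 else x m := fun m => rfl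
    have hysum : ∀ (S : Finset (Fin n)), ∑ m ∈ S, y m = ∑ m ∈ S, (if m = j then x j + 1 else x m) :=
      fun S => Finset.sum_congr rfl (fun m _ => rfl)
    have hyload : ∀ t, load s e y t
        = ∑ m ∈ Finset.univ.filter (fun i => s i ≤ t ∧ t < e i), (if m = j then x j + 1 else x m) := by
      intro t; exact hysum _
    have hyF : Feas s e W Max y := by
      constructor
      · intro i
        rcases eq_or_ne i j with h | h
        · rw [hyval i, if_pos h]; omega
        · rw [hyval i, if_neg h]; exact hxF.1 i
      · intro t
        have hmain := sum_one_update x j (x j + 1) (Finset.univ.filter (fun i => s i ≤ t ∧ t < e i))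
        have hWt := hxF.2 t
        have hloadx : load s e x t = ∑ m ∈ Finset.univ.filter (fun i => s i ≤ t ∧ t < e i), x m := rfl
        rw [hyload t]
        by_cases hjt : s j ≤ t ∧ t < e j
        · have hjmem : j ∈ Finset.univ.filter (fun i => s i ≤ t ∧ t < e i) := by simp [hjt]
          rw [if_pos hjmem, if_pos hjmem] at hmain
          have hne : load s e x t ≠ W := fun h => hc t hjt h
          omega
        · have hjmem : j ∉ Finset.univ.filter (fun i => s i ≤ t ∧ t < e i) := by simp [hjt]
          rw [if_neg hjmem, if_neg hjmem] at hmain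
          omega
    have hKle := hmax y hyF
    have hsum : ∑ i, y i = (∑ i, x i) + 1 := by
      have hmain := sum_one_update x j (x j + 1) Finset.univ
      rw [if_pos (Finset.mem_univ j), if_pos (Finset.mem_univ j)] at hmain
      rw [hysum]
      omega
    have hsq : ∑ i, x i * x i ≤ ∑ i, y i * y i := by
      apply Finset.sum_le_sum
      intro i _
      rcases eq_or_ne i j with h | h
      · rw [hyval i, if_pos h, h]; nlinarith
      · rw [hyval i, if_neg h]
    have hpsi : ∑ i, x i * om e i ≤ ∑ i, y i * om e i := by
      apply Finset.sum_le_sum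
      intro i _
      rcases eq_or_ne i j with h | h
      · rw [hyval i, if_pos h, h]; exact Nat.mul_le_mul_right _ (by omega)
      · rw [hyval i, if_neg h]
    have hKlt : K x < K y := by
      have h1 : (∑ i, x i) * M1 + ∑ i, x i * x i < (∑ i, y i) * M1 + ∑ i, y i * y i := by
        have : (∑ i, x i) * M1 < (∑ i, y i) * M1 :=
          mul_lt_mul_of_pos_right (by omega) (by omega)
        omega
      have h2 : ((∑ i, x i) * M1 + ∑ i, x i * x i) * M2 < ((∑ i, y i) * M1 + ∑ i, y i * y i) * M2 :=
        mul_lt_mul_of_pos_right h1 (by omega)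
      have hKx : K x = ((∑ i, x i) * M1 + ∑ i, x i * x i) * M2 + ∑ i, x i * om e i := rfl
      have hKy : K y = ((∑ i, y i) * M1 + ∑ i, y i * y i) * M2 + ∑ i, y i * om e i := rfl
      omega
    omega
  · -- HBlock
    intro i j δ hij h1 hδi hδj himp
    by_contra hc
    push_neg at hc
    set y : Fin n → ℕ := fun m => if m = i then x i - δ else if m = j then x j + δ else x m with hy
    have hyval : ∀ m, y m = if m = i then x i - δ else if m = j then x j + δ else x m := fun m => rfl
    have hysum : ∀ (S : Finset (Fin n)), ∑ m ∈ S, y m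
        = ∑ m ∈ S, (if m = i then x i - δ else if m = j then x j + δ else x m) :=
      fun S => Finset.sum_congr rfl (fun m _ => rfl)
    have hmain := sum_two_update x i j hij (x i - δ) (x j + δ)
    have hyF : Feas s e W Max y := by
      constructor
      · intro m
        rcases eq_or_ne m i with h | h
        · rw [hyval m, if_pos h]; have := hxF.1 i; omega
        · rcases eq_or_ne m j with h2 | h2
          · rw [hyval m, if_neg h, if_pos h2]; omega
          · rw [hyval m, if_neg h, if_neg h2]; exact hxF.1 m
      · intro t
        have hm := hmain (Finset.univ.filter (fun m => s m ≤ t ∧ t < e m))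
        have hWt := hxF.2 t
        have hloadx : load s e x t = ∑ m ∈ Finset.univ.filter (fun m => s m ≤ t ∧ t < e m), x m := rfl
        have hloady : load s e y t
            = ∑ m ∈ Finset.univ.filter (fun m => s m ≤ t ∧ t < e m),
                (if m = i then x i - δ else if m = j then x j + δ else x m) := hysum _
        rw [hloady]
        by_cases hjt : s j ≤ t ∧ t < e j
        · by_cases hit : s i ≤ t ∧ t < e i
          · have himem : i ∈ Finset.univ.filter (fun m => s m ≤ t ∧ t < e m) := by simp [hit]
            have hjmem : j ∈ Finset.univ.filter (fun m => s m ≤ t ∧ t < e m) := by simp [hjt]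
            rw [if_pos himem, if_pos hjmem, if_pos himem, if_pos hjmem] at hm
            omega
          · have hbl := hc t hjt
            have hbl2 : load s e x t + δ ≤ W := by
              apply hbl
              intro hsle
              by_contra h2
              exact hit ⟨hsle, lt_of_not_ge h2⟩
            have himem : i ∉ Finset.univ.filter (fun m => s m ≤ t ∧ t < e m) := by
              simp only [Finset.mem_filter, Finset.mem_univ, true_and]; exact hit
            have hjmem : j ∈ Finset.univ.filter (fun m => s m ≤ t ∧ t < e m) := by simp [hjt]
            rw [if_neg himem, if_pos hjmem, if_neg himem, if_pos hjmem] at hm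
            omega
        · by_cases hit : s i ≤ t ∧ t < e i
          · have himem : i ∈ Finset.univ.filter (fun m => s m ≤ t ∧ t < e m) := by simp [hit]
            have hjmem : j ∉ Finset.univ.filter (fun m => s m ≤ t ∧ t < e m) := by
              simp only [Finset.mem_filter, Finset.mem_univ, true_and]; exact hjt
            rw [if_pos himem, if_neg hjmem, if_pos himem, if_neg hjmem] at hm
            omega
          · have himem : i ∉ Finset.univ.filter (fun m => s m ≤ t ∧ t < e m) := by
              simp only [Finset.mem_filter, Finset.mem_univ, true_and]; exact hit
            have hjmem : j ∉ Finset.univ.filter (fun m => s m ≤ t ∧ t < e m) := by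
              simp only [Finset.mem_filter, Finset.mem_univ, true_and]; exact hjt
            rw [if_neg himem, if_neg hjmem, if_neg himem, if_neg hjmem] at hm
            omega
    have hKle := hmax y hyF
    have hmu := hmain Finset.univ
    rw [if_pos (Finset.mem_univ i), if_pos (Finset.mem_univ j),
        if_pos (Finset.mem_univ i), if_pos (Finset.mem_univ j)] at hmu
    have hsum : ∑ m, y m = ∑ m, x m := by
      rw [hysum]; omega
    have hsq : ∑ m, y m * y m + x i * x i + x j * x j
        = (∑ m, x m * x m) + (x i - δ) * (x i - δ) + (x j + δ) * (x j + δ) := by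
      have hcong : ∑ m, y m * y m = ∑ m, (if m = i then (x i - δ) * (x i - δ) else if m = j then (x j + δ) * (x j + δ) else x m * x m) := by
        apply Finset.sum_congr rfl
        intro m _
        rw [hyval m]
        rcases eq_or_ne m i with rfl | h
        · simp
        · rcases eq_or_ne m j with rfl | h2
          · simp [h]
          · simp [h, h2]
      rw [hcong]
      have h := sum_two_update (fun m => x m * x m) i j hij ((x i - δ) * (x i - δ)) ((x j + δ) * (x j + δ)) Finset.univ
      rw [if_pos (Finset.mem_univ i), if_pos (Finset.mem_univ j),
          if_pos (Finset.mem_univ i), if_pos (Finset.mem_univ j)] at h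
      omega
    have hpsi : ∑ m, y m * om e m + x i * om e i + x j * om e j
        = (∑ m, x m * om e m) + (x i - δ) * om e i + (x j + δ) * om e j := by
      have hcong : ∑ m, y m * om e m = ∑ m, (if m = i then (x i - δ) * om e i else if m = j then (x j + δ) * om e j else x m * om e m) := by
        apply Finset.sum_congr rfl
        intro m _
        rw [hyval m]
        rcases eq_or_ne m i with rfl | h
        · simp
        · rcases eq_or_ne m j with rfl | h2
          · simp [h]
          · simp [h, h2]
      rw [hcong]
      have h := sum_two_update (fun m => x m * om e m) i j hij ((x i - δ) * om e i) ((x j + δ) * om e j) Finset.univ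
      rw [if_pos (Finset.mem_univ i), if_pos (Finset.mem_univ j),
          if_pos (Finset.mem_univ i), if_pos (Finset.mem_univ j)] at h
      omega
    have hpx := hpsi_bound x hxF
    have hpy := hpsi_bound y hyF
    have hKx : K x = ((∑ m, x m) * M1 + ∑ m, x m * x m) * M2 + ∑ m, x m * om e m := rfl
    have hKy : K y = ((∑ m, y m) * M1 + ∑ m, y m * y m) * M2 + ∑ m, y m * om e m := rfl
    rcases himp with hstrict | ⟨heq, homlt⟩
    · have key : ∀ a b c : ℕ, a = c + δ → a < b + δ → a * a + b * b < c * c + (b + δ) * (b + δ) := by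
        intro a b c hac hab
        subst hac
        nlinarith
    -- squares strictly increase
      have hkey := key (x i) (x j) (x i - δ) (by omega) hstrict
      have hsqlt : ∑ m, x m * x m < ∑ m, y m * y m := by omega
      have h2 : ((∑ m, x m) * M1 + ∑ m, x m * x m) * M2 + M2 ≤ ((∑ m, x m) * M1 + ∑ m, y m * y m) * M2 := by
        have hA : ((∑ m, x m) * M1 + ∑ m, x m * x m + 1) * M2 ≤ ((∑ m, x m) * M1 + ∑ m, y m * y m) * M2 :=
          Nat.mul_le_mul_right _ (by omega)
        have hB : ((∑ m, x m) * M1 + ∑ m, x m * x m) * M2 + M2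
            = ((∑ m, x m) * M1 + ∑ m, x m * x m + 1) * M2 := by ring
        omega
      rw [hsum] at hKy
      omega
    · have hswap : x i - δ = x j := by omega
      have hsqeq : ∑ m, y m * y m = ∑ m, x m * x m := by
        rw [hswap, ← heq] at hsq
        omega
      have hpsilt : ∑ m, x m * om e m < ∑ m, y m * om e m := by
        rw [hswap, ← heq] at hpsi
        have key : x i * om e i + x j * om e j < x j * om e i + x i * om e j := by
          obtain ⟨d, hd, hxi⟩ : ∃ d, 1 ≤ d ∧ x i = x j + d := ⟨δ, h1, heq⟩
          obtain ⟨c, hc2, hom2⟩ : ∃ c, 1 ≤ c ∧ om e j = om e i + c :=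
            ⟨om e j - om e i, by omega, by omega⟩
          rw [hxi, hom2]
          have hdc : 0 < d * c := Nat.mul_pos (by omega) (by omega)
          nlinarith
        omega
      rw [hsum, hsqeq] at hKy
      omega

def Parts (s e : Fin n → ℝ) (Max : ℕ) (x : Fin n → ℕ) (t : ℝ) : Finset (Fin n) :=
  Finset.univ.filter (fun i => (0 < x i ∧ x i < Max) ∧ s i ≤ t ∧ t < e i)

structure Ctx (s e : Fin n → ℝ) (Max r q W : ℕ) (x : Fin n → ℕ) : Prop where
  hse : ∀ i, s i < e i
  hM1 : 1 ≤ Max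
  hq : 1 ≤ q
  hr0 : 0 < r
  hrM : r < Max
  hW : W = q * Max + r
  hF : Feas s e W Max x
  hT : HTight s e W Max x
  hB : HBlock s e W Max x

section Main

variable {s e : Fin n → ℝ} {Max r q W : ℕ} {x : Fin n → ℕ}

lemma hstep_up (hc : Ctx s e Max r q W x) {A c : ℕ}
    (h : q * Max < Max * A + c) (hcM : c ≤ Max) : q * Max ≤ Max * A := by
  have h2 : Max * q < Max * (A + 1) := by
    rw [Nat.mul_succ]
    calc Max * q = q * Max := mul_comm _ _
      _ < Max * A + c := h
      _ ≤ Max * A + Max := by omega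
  have h3 : q ≤ A := by
    have := Nat.lt_of_mul_lt_mul_left h2
    omega
  calc q * Max ≤ A * Max := Nat.mul_le_mul_right _ h3
    _ = Max * A := mul_comm _ _

lemma hstep_down (hc : Ctx s e Max r q W x) {A c : ℕ}
    (h : Max * A ≤ q * Max + c) (hcM : c < Max) : Max * A ≤ q * Max := by
  have h2 : Max * A < Max * (q + 1) := by
    rw [Nat.mul_succ]
    calc Max * A ≤ q * Max + c := h
      _ < q * Max + Max := by omega
      _ = Max * q + Max := by rw [mul_comm]
  have h3 : A ≤ q := by
    have := Nat.lt_of_mul_lt_mul_left h2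
    omega
  calc Max * A = A * Max := mul_comm _ _
    _ ≤ q * Max := Nat.mul_le_mul_right _ h3
    _ = q * Max := rfl

lemma hstep4 {A B : ℕ} (h : Max * A < Max * B) : Max * A + Max ≤ Max * B := by
  have h3 : A + 1 ≤ B := Nat.lt_of_mul_lt_mul_left h
  calc Max * A + Max = Max * (A + 1) := by rw [Nat.mul_succ]
    _ ≤ Max * B := Nat.mul_le_mul_left _ h3

lemma val_r (hc : Ctx s e Max r q W x) {A v : ℕ}
    (h : Max * A + v = W) (hv : v < Max) : v = r := by
  have h2 : Max * A + v = Max * q + r := by rw [h, hc.hW, mul_comm]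
  have h3 : (Max * A + v) % Max = v % Max := Nat.mul_add_mod _ _ _
  have h4 : (Max * q + r) % Max = r % Max := Nat.mul_add_mod _ _ _
  rw [h2, h4] at h3
  rw [Nat.mod_eq_of_lt hc.hrM, Nat.mod_eq_of_lt hv] at h3
  omega

lemma mod_contra (hc : Ctx s e Max r q W x) {A B vv : ℕ}
    (h : Max * A = Max * B + vv) (h0 : 0 < vv) (hM : vv < Max) : False := by
  have h3 : (Max * A) % Max = 0 := Nat.mul_mod_right _ _
  have h4 : (Max * B + vv) % Max = vv % Max := Nat.mul_add_mod _ _ _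
  rw [h, h4, Nat.mod_eq_of_lt hM] at h3
  omega

lemma load_decomp (hc : Ctx s e Max r q W x) (t : ℝ) :
    load s e x t = Max * ((Finset.univ.filter (fun i => x i = Max ∧ s i ≤ t ∧ t < e i)).card)
      + ∑ i ∈ Parts s e Max x t, x i := by
  classical
  have h1 : load s e x t
      = ∑ i ∈ (Finset.univ.filter (fun i => s i ≤ t ∧ t < e i)).filter (fun i => x i = Max), x i
        + ∑ i ∈ (Finset.univ.filter (fun i => s i ≤ t ∧ t < e i)).filter (fun i => ¬ x i = Max), x i :=
    (Finset.sum_filter_add_sum_filter_not _ _ _).symm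
  rw [h1]
  congr 1
  · have h2 : ∀ i ∈ (Finset.univ.filter (fun i => s i ≤ t ∧ t < e i)).filter (fun i => x i = Max), x i = Max := by
      intro i hi; exact (Finset.mem_filter.1 hi).2
    rw [Finset.sum_congr rfl h2, Finset.sum_const, smul_eq_mul, mul_comm]
    congr 1
    rw [Finset.filter_filter]
    apply congrArg Finset.card
    ext i
    simp only [Finset.mem_filter, Finset.mem_univ, true_and]
    tauto
  · rw [← Finset.sum_filter_ne_zero (f := x)
      ((Finset.univ.filter (fun i => s i ≤ t ∧ t < e i)).filter (fun i => ¬ x i = Max))]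
    apply Finset.sum_congr _ (fun _ _ => rfl)
    rw [Finset.filter_filter, Finset.filter_filter]
    ext i
    simp only [Parts, Finset.mem_filter, Finset.mem_univ, true_and]
    have := hc.hF.1 i
    constructor
    · rintro ⟨hact, hne, h0⟩
      exact ⟨⟨by omega, by omega⟩, hact⟩
    · rintro ⟨⟨h0, hlt⟩, hact⟩
      exact ⟨hact, by omega, by omega⟩

lemma no_contain (hc : Ctx s e Max r q W x) {i j : Fin n}
    (hi : 0 < x i ∧ x i < Max) (hj : 0 < x j ∧ x j < Max) (hij : i ≠ j) :
    ¬ (s i ≤ s j ∧ e j ≤ e i) := by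
  rintro ⟨hs, he⟩
  obtain ⟨t, hactj, hnacti, _⟩ := hc.hB i j (min (x i) (Max - x j))
    hij (by omega) (by omega) (by omega) (by left; omega)
  exact hnacti ⟨le_trans hs hactj.1, lt_of_lt_of_le hactj.2 he⟩

lemma s_inj (hc : Ctx s e Max r q W x) {i j : Fin n}
    (hi : 0 < x i ∧ x i < Max) (hj : 0 < x j ∧ x j < Max) (hij : i ≠ j) :
    s i ≠ s j := by
  intro hss
  rcases le_total (e i) (e j) with h | h
  · exact no_contain hc hj hi hij.symm ⟨le_of_eq hss.symm, h⟩
  · exact no_contain hc hi hj hij ⟨le_of_eq hss, h⟩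

lemma align (hc : Ctx s e Max r q W x) {i j : Fin n}
    (hi : 0 < x i ∧ x i < Max) (hj : 0 < x j ∧ x j < Max) (hss : s i < s j) :
    e i < e j := by
  by_contra h
  push_neg at h
  exact no_contain hc hi hj (fun hh => by subst hh; exact lt_irrefl _ hss) ⟨le_of_lt hss, h⟩

lemma om_lt (hc : Ctx s e Max r q W x) {i j : Fin n} (h : e i < e j) :
    om e j < om e i := by
  apply Finset.card_lt_card
  rw [Finset.ssubset_iff_of_subset]
  · exact ⟨j, by simp [h], by simp⟩
  · intro m hm
    simp only [om, Finset.mem_filter, Finset.mem_univ, true_and] at hm ⊢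
    exact lt_trans h hm

lemma sort3 {P : Fin n → Prop} {d1 d2 d3 : Fin n} (f : Fin n → ℝ)
    (h12 : f d1 ≠ f d2) (h13 : f d1 ≠ f d3) (h23 : f d2 ≠ f d3)
    (p1 : P d1) (p2 : P d2) (p3 : P d3) :
    ∃ a b c, P a ∧ P b ∧ P c ∧ f a < f b ∧ f b < f c := by
  rcases lt_or_gt_of_ne h12 with h | h
  · rcases lt_or_gt_of_ne h13 with h' | h'
    · rcases lt_or_gt_of_ne h23 with h'' | h''
      · exact ⟨d1, d2, d3, p1, p2, p3, h, h''⟩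
      · exact ⟨d1, d3, d2, p1, p3, p2, h', h''⟩
    · exact ⟨d3, d1, d2, p3, p1, p2, h', h⟩
  · rcases lt_or_gt_of_ne h13 with h' | h'
    · exact ⟨d2, d1, d3, p2, p1, p3, h, h'⟩
    · rcases lt_or_gt_of_ne h23 with h'' | h''
      · exact ⟨d2, d3, d1, p2, p3, p1, h'', h'⟩
      · exact ⟨d3, d2, d1, p3, p2, p1, h'', h⟩

lemma mem_Parts {t : ℝ} {d : Fin n} :
    d ∈ Parts s e Max x t ↔ (0 < x d ∧ x d < Max) ∧ s d ≤ t ∧ t < e d := by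
  simp [Parts]

lemma P1X (hc : Ctx s e Max r q W x) :
    ∀ N c, (0 < x c ∧ x c < Max) →
    (∀ d, (0 < x d ∧ x d < Max) → s d < s c → x d = r) →
    (Finset.univ.filter (fun d => (0 < x d ∧ x d < Max) ∧ s d < s c)).card = N →
    ∀ t a b, (0 < x a ∧ x a < Max) → (0 < x b ∧ x b < Max) →
      (s a ≤ t ∧ t < e a) → (s b ≤ t ∧ t < e b) → (s c ≤ t ∧ t < e c) →
      s a < s b → s b < s c → False := by
  intro N
  induction N using Nat.strong_induction_on with
  | _ N IH =>
  intro c hcP hval hN t a b haP hbP hat hbt hct hab hbc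
  have hxb : x b = r := hval b hbP hbc
  have hxa : x a = r := hval a haP (lt_trans hab hbc)
  have hr0 := hc.hr0
  have hrM := hc.hrM
  set δ : ℕ := if x c ≤ r then 1 else x c + 1 - r with hδ
  have hδ1 : 1 ≤ δ := by rw [hδ]; split <;> omega
  have hδ2 : δ ≤ x c := by rw [hδ]; split <;> omega
  have hδ3 : r + δ ≤ Max := by rw [hδ]; split <;> omega
  have hδ4 : x c < r + δ := by rw [hδ]; split <;> omega
  have hcb : c ≠ b := fun h => by rw [h] at hbc; exact lt_irrefl _ hbc
  obtain ⟨z, hbz, hncz, hload⟩ := hc.hB c b δ hcb hδ1 hδ2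
    (by rw [hxb]; exact hδ3) (by left; rw [hxb]; exact hδ4)
  have hzc : z < s c := by
    have hebc : e b < e c := align hc hbP hcP hbc
    by_contra h
    push_neg at h
    exact hncz ⟨h, lt_trans hbz.2 hebc⟩
  have haz : a ∈ Parts s e Max x z := mem_Parts.2
    ⟨haP, le_trans (le_of_lt hab) hbz.1, lt_trans (lt_of_lt_of_le hzc hct.1) hat.2⟩
  have hbz' : b ∈ Parts s e Max x z := mem_Parts.2 ⟨hbP, hbz⟩
  have hallr : ∀ d ∈ Parts s e Max x z, x d = r := by
    intro d hd
    rw [mem_Parts] at hd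
    exact hval d hd.1 (lt_of_le_of_lt hd.2.1 hzc)
  have hab' : a ≠ b := fun h => by rw [h] at hab; exact lt_irrefl _ hab
  have hcard : (Parts s e Max x z).card = 2 := by
    have hge : 1 < (Parts s e Max x z).card := Finset.one_lt_card.2 ⟨a, haz, b, hbz', hab'⟩
    by_contra hne2
    have h3 : 2 < (Parts s e Max x z).card := by omega
    obtain ⟨d1, d2, d3, hd1, hd2, hd3, h12, h13, h23⟩ := Finset.two_lt_card_iff.1 h3
    have hP1 := mem_Parts.1 hd1
    have hP2 := mem_Parts.1 hd2
    have hP3 := mem_Parts.1 hd3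
    obtain ⟨u, v2, w2, pu, pv, pw, huv, hvw⟩ :=
      sort3 (P := fun d => d ∈ Parts s e Max x z) s
        (s_inj hc hP1.1 hP2.1 h12) (s_inj hc hP1.1 hP3.1 h13) (s_inj hc hP2.1 hP3.1 h23)
        hd1 hd2 hd3
    have hPu := mem_Parts.1 pu
    have hPv := mem_Parts.1 pv
    have hPw := mem_Parts.1 pw
    have hw2c : s w2 < s c := lt_of_le_of_lt hPw.2.1 hzc
    have hmeas : (Finset.univ.filter (fun d => (0 < x d ∧ x d < Max) ∧ s d < s w2)).card < N := by
      rw [← hN]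
      apply Finset.card_lt_card
      have hsub : Finset.univ.filter (fun d => (0 < x d ∧ x d < Max) ∧ s d < s w2)
          ⊆ Finset.univ.filter (fun d => (0 < x d ∧ x d < Max) ∧ s d < s c) := by
        intro d hd
        simp only [Finset.mem_filter, Finset.mem_univ, true_and] at hd ⊢
        exact ⟨hd.1, lt_trans hd.2 hw2c⟩
      rw [Finset.ssubset_iff_of_subset hsub]
      refine ⟨w2, ?_, ?_⟩
      · simp only [Finset.mem_filter, Finset.mem_univ, true_and]
        exact ⟨hPw.1, hw2c⟩
      · simp only [Finset.mem_filter, Finset.mem_univ, true_and]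
        rintro ⟨-, hlt⟩
        exact lt_irrefl _ hlt
    exact IH _ hmeas w2 hPw.1
      (fun d hd hlt => hval d hd (lt_trans hlt hw2c)) rfl
      z u v2 hPu.1 hPv.1 hPu.2 hPv.2 hPw.2 huv hvw
  have hsum2 : ∑ i ∈ Parts s e Max x z, x i = 2 * r := by
    rw [Finset.sum_congr rfl hallr, Finset.sum_const, hcard, smul_eq_mul]
  have hLD := load_decomp hc z
  have hfz := hc.hF.2 z
  have hWq : W = Max * q + r := by rw [hc.hW, mul_comm]
  rw [hLD, hsum2] at hfz hload
  have h4 : Max * ((Finset.univ.filter (fun i => x i = Max ∧ s i ≤ z ∧ z < e i)).card) + Max ≤ Max * q :=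
    hstep4 (by omega)
  omega

lemma P1Xfull (hc : Ctx s e Max r q W x) {c : Fin n} (hcP : 0 < x c ∧ x c < Max)
    (hval : ∀ d, (0 < x d ∧ x d < Max) → s d < s c → x d = r)
    {t : ℝ} {a b : Fin n} (haP : 0 < x a ∧ x a < Max) (hbP : 0 < x b ∧ x b < Max)
    (hat : s a ≤ t ∧ t < e a) (hbt : s b ≤ t ∧ t < e b) (hct : s c ≤ t ∧ t < e c)
    (hab : s a < s b) (hbc : s b < s c) : False :=
  P1X hc _ c hcP hval rfl t a b haP hbP hat hbt hct hab hbc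

lemma hstep_up' (hc : Ctx s e Max r q W x) {A c : ℕ}
    (h : Max * q < Max * A + c) (hcM : c ≤ Max) : Max * q ≤ Max * A := by
  have h1 : q * Max < Max * A + c := by rw [mul_comm q Max]; exact h
  have h2 := hstep_up hc h1 hcM
  calc Max * q = q * Max := mul_comm _ _
    _ ≤ Max * A := h2

lemma block_left (hc : Ctx s e Max r q W x) {j0 j1 : Fin n} {z : ℝ}
    (hj0P : 0 < x j0 ∧ x j0 < Max) (hj1P : 0 < x j1 ∧ x j1 < Max)
    (hs : s j0 < s j1) (hj0z : s j0 ≤ z ∧ z < e j0) (hn : ¬(s j1 ≤ z ∧ z < e j1)) :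
    z < s j1 := by
  have hee := align hc hj0P hj1P hs
  by_contra h
  push_neg at h
  exact hn ⟨h, lt_trans hj0z.2 hee⟩

lemma block_shape (hc : Ctx s e Max r q W x) {j0 j1 : Fin n} {z : ℝ}
    (hj0P : 0 < x j0 ∧ x j0 < Max)
    (hval : ∀ d, (0 < x d ∧ x d < Max) → s d < s j0 → x d = r)
    (hgap : ∀ d, (0 < x d ∧ x d < Max) → s j0 < s d → s j1 ≤ s d)
    (hz : z < s j1) (hj0z : s j0 ≤ z ∧ z < e j0) :
    ((∀ d ∈ Parts s e Max x z, d = j0) ∧ ∑ i ∈ Parts s e Max x z, x i = x j0)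
    ∨ (∑ i ∈ Parts s e Max x z, x i = x j0 + r) := by
  have hj0m : j0 ∈ Parts s e Max x z := mem_Parts.2 ⟨hj0P, hj0z⟩
  have hstruct : ∀ d ∈ Parts s e Max x z, d = j0 ∨ (s d < s j0 ∧ x d = r) := by
    intro d hd
    obtain ⟨hdP, hdz⟩ := mem_Parts.1 hd
    rcases lt_trichotomy (s d) (s j0) with h | h | h
    · exact Or.inr ⟨h, hval d hdP h⟩
    · left
      by_contra hne
      exact s_inj hc hdP hj0P hne h
    · exfalso
      have h2 := hgap d hdP h
      have h3 : s d ≤ z := hdz.1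
      linarith
  have hsum0 : ∑ i ∈ Parts s e Max x z, x i = x j0 + ∑ i ∈ (Parts s e Max x z).erase j0, x i :=
    (Finset.add_sum_erase _ x hj0m).symm
  have hcard : ((Parts s e Max x z).erase j0).card ≤ 1 := by
    by_contra hgt
    have hgt2 : 1 < ((Parts s e Max x z).erase j0).card := by omega
    obtain ⟨a, ha, b, hb, hab⟩ := Finset.one_lt_card.1 hgt2
    have haM := Finset.mem_of_mem_erase ha
    have haj0 := (Finset.mem_erase.1 ha).1
    have hbM := Finset.mem_of_mem_erase hb
    have hbj0 := (Finset.mem_erase.1 hb).1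
    have haP := (mem_Parts.1 haM).1
    have hbP := (mem_Parts.1 hbM).1
    have hsa : s a < s j0 := ((hstruct a haM).resolve_left haj0).1
    have hsb : s b < s j0 := ((hstruct b hbM).resolve_left hbj0).1
    rcases lt_or_gt_of_ne (s_inj hc haP hbP hab) with h | h
    · exact P1Xfull hc hj0P hval haP hbP (mem_Parts.1 haM).2 (mem_Parts.1 hbM).2 hj0z h hsb
    · exact P1Xfull hc hj0P hval hbP haP (mem_Parts.1 hbM).2 (mem_Parts.1 haM).2 hj0z h hsa
  rcases Nat.le_one_iff_eq_zero_or_eq_one.1 hcard with h0 | h1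
  · left
    have hemp := Finset.card_eq_zero.1 h0
    constructor
    · intro d hd
      rcases hstruct d hd with h | h
      · exact h
      · exfalso
        have hdne : d ≠ j0 := fun hh => by rw [hh] at h; exact lt_irrefl _ h.1
        have : d ∈ (Parts s e Max x z).erase j0 := Finset.mem_erase.2 ⟨hdne, hd⟩
        rw [hemp] at this
        exact absurd this (Finset.notMem_empty _)
    · rw [hsum0, hemp, Finset.sum_empty]
      omega
  · right
    obtain ⟨d0, hd0⟩ := Finset.card_eq_one.1 h1
    have hd0mem : d0 ∈ (Parts s e Max x z).erase j0 := by
      rw [hd0]; exact Finset.mem_singleton_self _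
    have hd0r : x d0 = r :=
      ((hstruct d0 (Finset.mem_of_mem_erase hd0mem)).resolve_left (Finset.mem_erase.1 hd0mem).1).2
    rw [hsum0, hd0, Finset.sum_singleton, hd0r]

lemma mirror_key (hc : Ctx s e Max r q W x) {τ : ℝ} {m b : Fin n}
    (hloadτ : load s e x τ = W)
    (hmmax : ∀ d, (0 < x d ∧ x d < Max) → d ≠ m → s d < s m)
    (hmP : 0 < x m ∧ x m < Max) (hmact : s m ≤ τ ∧ τ < e m)
    (hbP : 0 < x b ∧ x b < Max) (hbact : s b ≤ τ ∧ τ < e b) (hbm : b ≠ m) : False := by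
  classical
  have hmD : m ∈ Parts s e Max x τ := mem_Parts.2 ⟨hmP, hmact⟩
  have hbD : b ∈ Parts s e Max x τ := mem_Parts.2 ⟨hbP, hbact⟩
  obtain ⟨b0, hb0D, hb0min⟩ := Finset.exists_min_image (Parts s e Max x τ) s ⟨m, hmD⟩
  have hD2 : 1 < (Parts s e Max x τ).card := Finset.one_lt_card.2 ⟨b, hbD, m, hmD, hbm⟩
  have hD'ne : ((Parts s e Max x τ).erase b0).Nonempty := by
    rw [← Finset.card_pos, Finset.card_erase_of_mem hb0D]
    omega
  obtain ⟨b1, hb1D', hb1min⟩ := Finset.exists_min_image _ s hD'ne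
  have hb1D := Finset.mem_of_mem_erase hb1D'
  have hb1ne : b1 ≠ b0 := (Finset.mem_erase.1 hb1D').1
  obtain ⟨hP0, hact0⟩ := mem_Parts.1 hb0D
  obtain ⟨hP1, hact1⟩ := mem_Parts.1 hb1D
  have hs01 : s b0 < s b1 :=
    lt_of_le_of_ne (hb0min b1 hb1D) (s_inj hc hP0 hP1 hb1ne.symm)
  set δ : ℕ := if x b0 ≤ x b1 then 1 else x b0 + 1 - x b1 with hδdef
  have hδ1 : 1 ≤ δ := by rw [hδdef]; split <;> omega
  have hδ2 : δ ≤ x b0 := by rw [hδdef]; split <;> omega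
  have hδ3 : x b1 + δ ≤ Max := by rw [hδdef]; split <;> omega
  have hδ4 : x b0 < x b1 + δ := by rw [hδdef]; split <;> omega
  obtain ⟨y, hb1y, hnb0y, hloady⟩ := hc.hB b0 b1 δ hb1ne.symm hδ1 hδ2 hδ3 (Or.inl hδ4)
  have hy0 : e b0 ≤ y := by
    by_contra h
    push_neg at h
    exact hnb0y ⟨le_trans (le_of_lt hs01) hb1y.1, h⟩
  have hτy : τ < y := lt_of_lt_of_le hact0.2 hy0
  have hPyD : Parts s e Max x y = (Parts s e Max x τ).erase b0 := by
    ext d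
    rw [mem_Parts, Finset.mem_erase, mem_Parts]
    constructor
    · rintro ⟨hdP, hsd, hed⟩
      have hdb0 : d ≠ b0 := by
        rintro rfl
        exact absurd hed (not_lt.2 hy0)
      have hsdτ : s d ≤ τ := by
        rcases eq_or_ne d m with rfl | hdm
        · exact hmact.1
        · exact le_trans (le_of_lt (hmmax d hdP hdm)) hmact.1
      exact ⟨hdb0, hdP, hsdτ, lt_trans hτy hed⟩
    · rintro ⟨hdne, hdP, hsd, hed⟩
      refine ⟨hdP, le_trans hsd (le_of_lt hτy), ?_⟩
      rcases eq_or_ne d b1 with rfl | hdb1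
      · exact hb1y.2
      · have hs1d : s b1 < s d :=
          lt_of_le_of_ne (hb1min d (Finset.mem_erase.2 ⟨hdne, mem_Parts.2 ⟨hdP, hsd, hed⟩⟩))
            (s_inj hc hP1 hdP hdb1.symm)
        exact lt_trans hb1y.2 (align hc hP1 hdP hs1d)
  have hadd : x b0 + ∑ i ∈ (Parts s e Max x τ).erase b0, x i = ∑ i ∈ Parts s e Max x τ, x i :=
    Finset.add_sum_erase _ x hb0D
  have hLDτ := load_decomp hc τ
  have hLDy := load_decomp hc y
  rw [hPyD] at hLDy
  have hfy := hc.hF.2 y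
  rw [hδdef] at hloady
  by_cases hle : x b0 ≤ x b1
  · rw [if_pos hle] at hloady
    have heq : Max * ((Finset.univ.filter (fun i => x i = Max ∧ s i ≤ y ∧ y < e i)).card)
        = Max * ((Finset.univ.filter (fun i => x i = Max ∧ s i ≤ τ ∧ τ < e i)).card) + x b0 := by
      omega
    exact mod_contra hc heq hP0.1 hP0.2
  · rw [if_neg hle] at hloady
    push_neg at hle
    have h2 : Max * ((Finset.univ.filter (fun i => x i = Max ∧ s i ≤ τ ∧ τ < e i)).card)
        < Max * ((Finset.univ.filter (fun i => x i = Max ∧ s i ≤ y ∧ y < e i)).card) := by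
      omega
    have h3 := hstep4 h2
    omega

lemma max_partial_r (hc : Ctx s e Max r q W x) {m : Fin n}
    (hmP : 0 < x m ∧ x m < Max)
    (hmmax : ∀ d, (0 < x d ∧ x d < Max) → d ≠ m → s d < s m) : x m = r := by
  obtain ⟨τ, hactτ, hloadτ⟩ := hc.hT m hmP.2
  by_cases hex : ∃ b, b ∈ Parts s e Max x τ ∧ b ≠ m
  · obtain ⟨b, hbmem, hbne⟩ := hex
    exact absurd (mirror_key hc hloadτ hmmax hmP hactτ (mem_Parts.1 hbmem).1
      (mem_Parts.1 hbmem).2 hbne) (fun h => h)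
  · push_neg at hex
    have hPset : Parts s e Max x τ = {m} := by
      apply Finset.eq_singleton_iff_unique_mem.2
      exact ⟨mem_Parts.2 ⟨hmP, hactτ⟩, fun d hd => hex d hd⟩
    have hLD := load_decomp hc τ
    rw [hPset, Finset.sum_singleton, hloadτ] at hLD
    exact val_r hc hLD.symm hmP.2

lemma all_partial_r (hc : Ctx s e Max r q W x) : ∀ i, 0 < x i → x i < Max → x i = r := by
  classical
  by_contra hcon
  push_neg at hcon
  obtain ⟨i0, hi01, hi02, hi0r⟩ := hcon
  have hBadne : (Finset.univ.filter (fun i => (0 < x i ∧ x i < Max) ∧ x i ≠ r)).Nonempty := by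
    refine ⟨i0, ?_⟩
    simp only [Finset.mem_filter, Finset.mem_univ, true_and]
    exact ⟨⟨hi01, hi02⟩, hi0r⟩
  obtain ⟨j0, hj0Bad, hj0min⟩ := Finset.exists_min_image _ s hBadne
  have hj0m := Finset.mem_filter.1 hj0Bad
  have hj0P : 0 < x j0 ∧ x j0 < Max := hj0m.2.1
  have hj0r : x j0 ≠ r := hj0m.2.2
  have hval : ∀ d, (0 < x d ∧ x d < Max) → s d < s j0 → x d = r := by
    intro d hdP hlt
    by_contra hdr
    have := hj0min d (Finset.mem_filter.2 ⟨Finset.mem_univ _, hdP, hdr⟩)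
    linarith
  have hr0 := hc.hr0
  have hrM := hc.hrM
  have hM1 := hc.hM1
  have hWq : W = Max * q + r := by rw [hc.hW, mul_comm]
  by_cases hmax0 : ∀ d, (0 < x d ∧ x d < Max) → d ≠ j0 → s d < s j0
  · exact hj0r (max_partial_r hc hj0P hmax0)
  push_neg at hmax0
  obtain ⟨d, hdP, hdne, hds⟩ := hmax0
  have hsj0d : s j0 < s d := lt_of_le_of_ne hds (s_inj hc hj0P hdP (Ne.symm hdne))
  have hAfterne : (Finset.univ.filter (fun d => (0 < x d ∧ x d < Max) ∧ s j0 < s d)).Nonempty := by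
    refine ⟨d, ?_⟩
    simp only [Finset.mem_filter, Finset.mem_univ, true_and]
    exact ⟨hdP, hsj0d⟩
  obtain ⟨j1, hj1A, hj1min⟩ := Finset.exists_min_image _ s hAfterne
  have hj1m := Finset.mem_filter.1 hj1A
  have hj1P : 0 < x j1 ∧ x j1 < Max := hj1m.2.1
  have hs01 : s j0 < s j1 := hj1m.2.2
  have hgap1 : ∀ d2, (0 < x d2 ∧ x d2 < Max) → s j0 < s d2 → s j1 ≤ s d2 := by
    intro d2 h1 h2
    exact hj1min d2 (Finset.mem_filter.2 ⟨Finset.mem_univ _, h1, h2⟩)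
  have hne10 : j1 ≠ j0 := fun h => by rw [h] at hs01; exact lt_irrefl _ hs01
  set δ1 : ℕ := if x j1 ≤ x j0 then 1 else x j1 + 1 - x j0 with hδ1def
  have hδ11 : 1 ≤ δ1 := by rw [hδ1def]; split <;> omega
  have hδ12 : δ1 ≤ x j1 := by rw [hδ1def]; split <;> omega
  have hδ13 : x j0 + δ1 ≤ Max := by rw [hδ1def]; split <;> omega
  have hδ14 : x j1 < x j0 + δ1 := by rw [hδ1def]; split <;> omega
  have hδv : δ1 + x j0 ≤ Max := by rw [hδ1def]; split <;> omega
  obtain ⟨z, hj0z, hnj1z, hloadz⟩ := hc.hB j1 j0 δ1 hne10 hδ11 hδ12 hδ13 (Or.inl hδ14)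
  have hzs1 : z < s j1 := block_left hc hj0P hj1P hs01 hj0z hnj1z
  have hLDz := load_decomp hc z
  have hfz := hc.hF.2 z
  rcases block_shape hc hj0P hval hgap1 hzs1 hj0z with ⟨hsingle, hS⟩ | hS
  · -- singleton at z
    rw [hS] at hLDz
    by_cases hwv : x j1 ≤ x j0
    · rw [hδ1def, if_pos hwv] at hloadz
      have hTight : Max * ((Finset.univ.filter (fun i => x i = Max ∧ s i ≤ z ∧ z < e i)).card) + x j0 = W := by
        omega
      exact hj0r (val_r hc hTight hj0P.2)
    · push_neg at hwv
      rw [hδ1def, if_neg (not_le.2 hwv)] at hloadz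
      by_cases hwr : x j1 < r
      · have h2 : Max * q < Max * ((Finset.univ.filter (fun i => x i = Max ∧ s i ≤ z ∧ z < e i)).card) := by
          omega
        have h3 := hstep4 h2
        omega
      · by_cases hvr : r < x j0
        · have h2 : Max * q < Max * ((Finset.univ.filter (fun i => x i = Max ∧ s i ≤ z ∧ z < e i)).card) + Max := by
            omega
          have h3 := hstep_up' hc h2 (le_refl Max)
          omega
        · have hvlt : x j0 < r := by omega
          by_cases hweq : x j1 = r
          · -- swap kill
            have himp : x j1 = x j0 + (r - x j0) ∧ om e j1 < om e j0 :=
              ⟨by omega, om_lt hc (align hc hj0P hj1P hs01)⟩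
            obtain ⟨z2, hj0z2, hnj1z2, hloadz2⟩ := hc.hB j1 j0 (r - x j0) hne10
              (by omega) (by omega) (by omega) (Or.inr himp)
            have hzs2 : z2 < s j1 := block_left hc hj0P hj1P hs01 hj0z2 hnj1z2
            have hLDz2 := load_decomp hc z2
            have hfz2 := hc.hF.2 z2
            rcases block_shape hc hj0P hval hgap1 hzs2 hj0z2 with ⟨_, hS2⟩ | hS2
            · rw [hS2] at hLDz2
              have h2 : Max * q < Max * ((Finset.univ.filter (fun i => x i = Max ∧ s i ≤ z2 ∧ z2 < e i)).card) := by
                omega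
              have h3 := hstep4 h2
              omega
            · rw [hS2] at hLDz2
              have h2 : Max * q < Max * ((Finset.univ.filter (fun i => x i = Max ∧ s i ≤ z2 ∧ z2 < e i)).card) + r := by
                omega
              have h3 := hstep_up' hc h2 (le_of_lt hrM)
              omega
          · have hwgt : r < x j1 := by omega
            -- no triple with top j1
            have hP1J1 : ∀ u a2 b2, (s j1 ≤ u ∧ u < e j1) → (0 < x a2 ∧ x a2 < Max) →
                (0 < x b2 ∧ x b2 < Max) → (s a2 ≤ u ∧ u < e a2) → (s b2 ≤ u ∧ u < e b2) →
                s a2 < s b2 → s b2 < s j1 → False := by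
              intro u a2 b2 hj1u ha2 hb2 hau hbu hab2 hb21
              rcases lt_trichotomy (s b2) (s j0) with hcmp | hcmp | hcmp
              · have hj0u : s j0 ≤ u ∧ u < e j0 := by
                  constructor
                  · linarith [hj1u.1]
                  · have hee := align hc hb2 hj0P hcmp
                    linarith [hbu.2]
                exact P1Xfull hc hj0P hval ha2 hb2 hau hbu hj0u hab2 hcmp
              · have hb2j0 : b2 = j0 := by
                  by_contra hne
                  exact s_inj hc hb2 hj0P hne hcmp
                rw [hb2j0] at hab2 hbu
                obtain ⟨z3, hj0z3, hnj1z3, hl3⟩ := hc.hB j1 j0 (x j1 + 1 - x j0) hne10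
                  (by omega) (by omega) (by omega) (Or.inl (by omega))
                have hzs3 : z3 < s j1 := block_left hc hj0P hj1P hs01 hj0z3 hnj1z3
                have ha2z3 : a2 ∈ Parts s e Max x z3 := by
                  refine mem_Parts.2 ⟨ha2, ?_, ?_⟩
                  · linarith [hj0z3.1]
                  · linarith [hj1u.1, hau.2]
                have ha2ne : a2 ≠ j0 := fun h => by rw [h] at hab2; exact lt_irrefl _ hab2
                rcases block_shape hc hj0P hval hgap1 hzs3 hj0z3 with ⟨hsing, hS3⟩ | hS3
                · exact ha2ne (hsing a2 ha2z3)
                · have hLDz3 := load_decomp hc z3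
                  have hfz3 := hc.hF.2 z3
                  rw [hS3] at hLDz3
                  have h2 : Max * q < Max * ((Finset.univ.filter (fun i => x i = Max ∧ s i ≤ z3 ∧ z3 < e i)).card) + Max := by
                    omega
                  have h3 := hstep_up' hc h2 (le_refl Max)
                  omega
              · have := hgap1 b2 hb2 hcmp
                linarith
            -- j2 phase
            by_cases hmax1 : ∀ d2, (0 < x d2 ∧ x d2 < Max) → d2 ≠ j1 → s d2 < s j1
            · have := max_partial_r hc hj1P hmax1
              omega
            · push_neg at hmax1
              obtain ⟨d2, hd2P, hd2ne, hd2s⟩ := hmax1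
              have hsj1d2 : s j1 < s d2 := lt_of_le_of_ne hd2s (s_inj hc hj1P hd2P (Ne.symm hd2ne))
              have hA2ne : (Finset.univ.filter (fun d => (0 < x d ∧ x d < Max) ∧ s j1 < s d)).Nonempty := by
                refine ⟨d2, ?_⟩
                simp only [Finset.mem_filter, Finset.mem_univ, true_and]
                exact ⟨hd2P, hsj1d2⟩
              obtain ⟨j2, hj2A, hj2min⟩ := Finset.exists_min_image _ s hA2ne
              have hj2m := Finset.mem_filter.1 hj2A
              have hj2P : 0 < x j2 ∧ x j2 < Max := hj2m.2.1
              have hs12 : s j1 < s j2 := hj2m.2.2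
              have hgap2 : ∀ d3, (0 < x d3 ∧ x d3 < Max) → s j1 < s d3 → s j2 ≤ s d3 := by
                intro d3 h1 h2
                exact hj2min d3 (Finset.mem_filter.2 ⟨Finset.mem_univ _, h1, h2⟩)
              have hne21 : j2 ≠ j1 := fun h => by rw [h] at hs12; exact lt_irrefl _ hs12
              set δ2 : ℕ := if x j2 ≤ x j1 then 1 else x j2 + 1 - x j1 with hδ2def
              have hδ21 : 1 ≤ δ2 := by rw [hδ2def]; split <;> omega
              have hδ22 : δ2 ≤ x j2 := by rw [hδ2def]; split <;> omega
              have hδ23 : x j1 + δ2 ≤ Max := by rw [hδ2def]; split <;> omega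
              have hδ24 : x j2 < x j1 + δ2 := by rw [hδ2def]; split <;> omega
              have hδ2b : δ2 + x j1 ≤ Max := by rw [hδ2def]; split <;> omega
              obtain ⟨u, hj1u, hnj2u, hlu⟩ := hc.hB j2 j1 δ2 hne21 hδ21 hδ22 hδ23 (Or.inl hδ24)
              have hus2 : u < s j2 := block_left hc hj1P hj2P hs12 hj1u hnj2u
              have hstructu : ∀ d3 ∈ Parts s e Max x u,
                  d3 = j1 ∨ d3 = j0 ∨ (s d3 < s j0 ∧ x d3 = r) := by
                intro d3 hd3
                obtain ⟨hd3P, hd3u⟩ := mem_Parts.1 hd3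
                rcases lt_trichotomy (s d3) (s j1) with h | h | h
                · right
                  rcases lt_trichotomy (s d3) (s j0) with h2 | h2 | h2
                  · exact Or.inr ⟨h2, hval d3 hd3P h2⟩
                  · left
                    by_contra hne
                    exact s_inj hc hd3P hj0P hne h2
                  · exfalso
                    have := hgap1 d3 hd3P h2
                    linarith
                · left
                  by_contra hne
                  exact s_inj hc hd3P hj1P hne h
                · exfalso
                  have := hgap2 d3 hd3P h
                  linarith [hd3u.1]
              have hj1mem : j1 ∈ Parts s e Max x u := mem_Parts.2 ⟨hj1P, hj1u⟩
              have hsumu : ∑ i ∈ Parts s e Max x u, x i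
                  = x j1 + ∑ i ∈ (Parts s e Max x u).erase j1, x i :=
                (Finset.add_sum_erase _ x hj1mem).symm
              have hlts : ∀ d3 ∈ (Parts s e Max x u).erase j1, s d3 < s j1 := by
                intro d3 hd3
                rcases hstructu d3 (Finset.mem_of_mem_erase hd3) with h | h | h
                · exact absurd h (Finset.mem_erase.1 hd3).1
                · rw [h]; exact hs01
                · exact lt_trans h.1 hs01
              have hcardu : ((Parts s e Max x u).erase j1).card ≤ 1 := by
                by_contra hgt
                have hgt2 : 1 < ((Parts s e Max x u).erase j1).card := by omega
                obtain ⟨a2, ha2m, b2, hb2m, hab2⟩ := Finset.one_lt_card.1 hgt2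
                have ha2M := Finset.mem_of_mem_erase ha2m
                have hb2M := Finset.mem_of_mem_erase hb2m
                have ha2P := (mem_Parts.1 ha2M).1
                have hb2P := (mem_Parts.1 hb2M).1
                rcases lt_or_gt_of_ne (s_inj hc ha2P hb2P hab2) with h | h
                · exact hP1J1 u a2 b2 hj1u ha2P hb2P (mem_Parts.1 ha2M).2 (mem_Parts.1 hb2M).2
                    h (hlts b2 hb2m)
                · exact hP1J1 u b2 a2 hj1u hb2P ha2P (mem_Parts.1 hb2M).2 (mem_Parts.1 ha2M).2
                    h (hlts a2 ha2m)
              have hLDu := load_decomp hc u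
              have hfu := hc.hF.2 u
              rcases Nat.le_one_iff_eq_zero_or_eq_one.1 hcardu with h0 | h1
              · -- singleton at u
                have hemp := Finset.card_eq_zero.1 h0
                rw [hemp, Finset.sum_empty] at hsumu
                rw [hsumu] at hLDu
                by_cases hx21 : x j2 ≤ x j1
                · rw [hδ2def, if_pos hx21] at hlu
                  have hTight : Max * ((Finset.univ.filter (fun i => x i = Max ∧ s i ≤ u ∧ u < e i)).card) + x j1 = W := by
                    omega
                  have := val_r hc hTight hj1P.2
                  omega
                · push_neg at hx21
                  rw [hδ2def, if_neg (not_le.2 hx21)] at hlu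
                  have h2 : Max * q < Max * ((Finset.univ.filter (fun i => x i = Max ∧ s i ≤ u ∧ u < e i)).card) + Max := by
                    omega
                  have h3 := hstep_up' hc h2 (le_refl Max)
                  omega
              · obtain ⟨d0, hd0eq⟩ := Finset.card_eq_one.1 h1
                have hd0mem : d0 ∈ (Parts s e Max x u).erase j1 := by
                  rw [hd0eq]; exact Finset.mem_singleton_self _
                have hd0P := (mem_Parts.1 (Finset.mem_of_mem_erase hd0mem)).1
                have hd0b : 1 ≤ x d0 ∧ x d0 ≤ r := by
                  rcases hstructu d0 (Finset.mem_of_mem_erase hd0mem) with h | h | h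
                  · exact absurd h (Finset.mem_erase.1 hd0mem).1
                  · rw [h]; omega
                  · rw [h.2]; omega
                rw [hd0eq, Finset.sum_singleton] at hsumu
                rw [hsumu] at hLDu
                have h2 : Max * q < Max * ((Finset.univ.filter (fun i => x i = Max ∧ s i ≤ u ∧ u < e i)).card) + Max := by
                  omega
                have h3 := hstep_up' hc h2 (le_refl Max)
                omega
  · -- pair at z : impossible
    rw [hS] at hLDz
    have h2 : Max * ((Finset.univ.filter (fun i => x i = Max ∧ s i ≤ z ∧ z < e i)).card) < Max * q := by
      omega
    have h3 := hstep4 h2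
    omega

lemma r_card_le_two (hc : Ctx s e Max r q W x) (t : ℝ) :
    (Finset.univ.filter (fun i => x i = r ∧ s i ≤ t ∧ t < e i)).card ≤ 2 := by
  by_contra h
  have h3 : 2 < (Finset.univ.filter (fun i => x i = r ∧ s i ≤ t ∧ t < e i)).card := by omega
  obtain ⟨a, b, c, ha, hb, hc3, hab, hac, hbc⟩ := Finset.two_lt_card_iff.1 h3
  simp only [Finset.mem_filter, Finset.mem_univ, true_and] at ha hb hc3
  have hr0 := hc.hr0
  have hrM := hc.hrM
  have haP : 0 < x a ∧ x a < Max := by rw [ha.1]; exact ⟨hr0, hrM⟩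
  have hbP : 0 < x b ∧ x b < Max := by rw [hb.1]; exact ⟨hr0, hrM⟩
  have hcP : 0 < x c ∧ x c < Max := by rw [hc3.1]; exact ⟨hr0, hrM⟩
  have hval : ∀ d, (0 < x d ∧ x d < Max) → ∀ _ : Prop, x d = r :=
    fun d hd _ => all_partial_r hc d hd.1 hd.2
  obtain ⟨u, v2, w2, pu, pv, pw, huv, hvw⟩ :=
    sort3 (P := fun d => (0 < x d ∧ x d < Max) ∧ s d ≤ t ∧ t < e d) s
      (s_inj hc haP hbP hab) (s_inj hc haP hcP hac) (s_inj hc hbP hcP hbc)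
      ⟨haP, ha.2⟩ ⟨hbP, hb.2⟩ ⟨hcP, hc3.2⟩
  exact P1Xfull hc pw.1 (fun d hd _ => all_partial_r hc d hd.1 hd.2)
    pu.1 pv.1 pu.2 pv.2 pw.2 huv hvw

lemma no_nest (hc : Ctx s e Max r q W x) {i j : Fin n}
    (hi : x i = r) (hj : x j = r) (hij : i ≠ j) :
    ¬ Set.Ico (s i) (e i) ⊂ Set.Ico (s j) (e j) := by
  intro hsub
  have h1 : Set.Ico (s i) (e i) ⊆ Set.Ico (s j) (e j) := subset_of_ssubset hsub
  have h2 := (Set.Ico_subset_Ico_iff (hc.hse i)).1 h1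
  have hiP : 0 < x i ∧ x i < Max := by rw [hi]; exact ⟨hc.hr0, hc.hrM⟩
  have hjP : 0 < x j ∧ x j < Max := by rw [hj]; exact ⟨hc.hr0, hc.hrM⟩
  exact no_contain hc hjP hiP hij.symm ⟨h2.1, h2.2⟩

end Main
end
end FBAP

open FBAP in
theorem stmt_11 {n : ℕ} (s e : Fin n → ℝ) (hse : ∀ i, s i < e i)
    (W : ℕ) (hW : 1 ≤ W) (rmax : Fin n → ℕ) (hrmax : ∀ i, rmax i ≤ W)
    (p : Fin n → ℝ) (hp : ∀ i, 1 ≤ p i)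
    (Max : ℕ) (hMax1 : 1 ≤ Max) (hMaxW : Max ≤ W)
    (hup : ∀ i, p i = 1) (hur : ∀ i, rmax i = Max)
    (r : ℕ) (hr : r = W % Max) (hrpos : 0 < r) :
    ∃ x : Fin n → ℕ, IsAlloc W s e rmax x ∧
      (∀ y : Fin n → ℕ, IsAlloc W s e rmax y → allocProfit p y ≤ allocProfit p x) ∧
      (∀ i, x i = 0 ∨ x i = r ∨ x i = Max) ∧
      (∀ i j : Fin n, x i = r → x j = r → i ≠ j →
        ¬ Set.Ico (s i) (e i) ⊂ Set.Ico (s j) (e j)) ∧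
      (∀ t : ℝ,
        (Finset.univ.filter (fun i => x i = r ∧ s i ≤ t ∧ t < e i)).card ≤ 2) := by
  classical
  have hMpos : 0 < Max := hMax1
  set q : ℕ := W / Max with hq_def
  have hWeq : W = q * Max + r := by
    rw [hr, hq_def, mul_comm]
    exact (Nat.div_add_mod W Max).symm
  have hq1 : 1 ≤ q := by
    rw [hq_def]
    exact (Nat.one_le_div_iff hMpos).2 hMaxW
  have hrM : r < Max := by
    rw [hr]
    exact Nat.mod_lt _ hMpos
  obtain ⟨x, hF, hopt, hT, hB⟩ := exists_good s e W Max hMax1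
  have hc : Ctx s e Max r q W x :=
    ⟨hse, hMax1, hq1, hrpos, hrM, hWeq, hF, hT, hB⟩
  have hFeasIff : ∀ y : Fin n → ℕ, IsAlloc W s e rmax y ↔ Feas s e W Max y := by
    intro y
    constructor
    · rintro ⟨h1, h2⟩
      exact ⟨fun i => (hur i) ▸ h1 i, h2⟩
    · rintro ⟨h1, h2⟩
      exact ⟨fun i => (hur i).symm ▸ h1 i, h2⟩
  have hprof : ∀ z : Fin n → ℕ, allocProfit p z = ((∑ i, z i : ℕ) : ℝ) := by
    intro z
    unfold allocProfit
    push_cast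
    apply Finset.sum_congr rfl
    intro i _
    rw [hup i, one_mul]
  refine ⟨x, (hFeasIff x).2 hF, ?_, ?_, ?_, ?_⟩
  · intro y hy
    rw [hprof y, hprof x]
    exact_mod_cast hopt y ((hFeasIff y).1 hy)
  · intro i
    by_cases h0 : x i = 0
    · exact Or.inl h0
    · by_cases hM : x i = Max
      · exact Or.inr (Or.inr hM)
      · refine Or.inr (Or.inl ?_)
        have h1 : 0 < x i := Nat.pos_of_ne_zero h0
        have h2 : x i < Max := lt_of_le_of_ne (hF.1 i) hM
        exact all_partial_r hc i h1 h2
  · intro i j hxi hxj hij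
    exact no_nest hc hxi hxj hij
  · intro t
    exact r_card_le_two hc t
end

section
/- Let ε ∈ (0,1) with W ≥ 1/ε² and let β ∈ (0,1). Call job i wide if r_max i ≥ ε·W and narrow otherwise. Suppose there exists a feasible contiguous coloring c of profit P such that ∑_{i wide} p i · max(|c i| − ⌈εW⌉, 0) ≤ β · P. Then there exist natural numbers x i (for all i) and y i (for wide i; set y i = 0 for narrow i) with x i ≤ min(r_max i, ⌈εW⌉) and y i ≤ r_max i − ⌈εW⌉ for wide i, such that: (1) ∑_{i wide} p i · y i ≤ β(1 − ε)P; (2) for every t : ℝ, ∑_{i : s i ≤ t < e i} (x i + y i) ≤ (1 − ε)W; and (3) ∑ i, p i · (x i + y i) ≥ (1 − 2ε)P. -/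
open Finset

/-- Distinct jobs `i, j` overlap if their half-open intervals intersect. -/
def Overlap {n : ℕ} (s e : Fin n → ℝ) (i j : Fin n) : Prop :=
  i ≠ j ∧ (Set.Ico (s i) (e i) ∩ Set.Ico (s j) (e j)).Nonempty

/-- A feasible contiguous coloring (FSAP solution). -/
def IsContigColoring {n : ℕ} (W : ℕ) (s e : Fin n → ℝ) (rmax : Fin n → ℕ)
    (c : Fin n → Finset (Fin W)) : Prop :=
  (∀ i, c i = ∅ ∨ ∃ a b : Fin W, a ≤ b ∧ c i = Finset.Icc a b) ∧
  (∀ i, (c i).card ≤ rmax i) ∧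
  (∀ i j, Overlap s e i j → c i ∩ c j = ∅)

/-- Profit of a contiguous coloring. -/
def colProfit {n W : ℕ} (p : Fin n → ℝ) (c : Fin n → Finset (Fin W)) : ℝ :=
  ∑ i, p i * (c i).card

private lemma card_filter_equiv {W : ℕ} (π : Fin W ≃ Fin W) (Q : Fin W → Prop)
    [DecidablePred Q] :
    (Finset.univ.filter (fun x => Q (π x))).card = (Finset.univ.filter Q).card := by
  have h : Finset.univ.filter (fun x => Q (π x))
      = (Finset.univ.filter Q).map π.symm.toEmbedding := by
    ext x
    simp only [Finset.mem_filter, Finset.mem_univ, true_and, Finset.mem_map,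
      Equiv.coe_toEmbedding, Equiv.symm_apply_eq]
    constructor
    · intro hx; exact ⟨π x, hx, rfl⟩
    · rintro ⟨y, hy, rfl⟩; exact hy
  rw [h, Finset.card_map]

private lemma card_filter_val_lt {W K : ℕ} (hKW : K ≤ W) :
    (Finset.univ.filter (fun v : Fin W => (v : ℕ) < K)).card = K := by
  have h : Finset.univ.filter (fun v : Fin W => (v : ℕ) < K)
      = (Finset.range K).attachFin
        (fun m hm => lt_of_lt_of_le (Finset.mem_range.mp hm) hKW) := by
    ext a
    simp [Finset.mem_attachFin, Finset.mem_range]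
  rw [h, Finset.card_attachFin, Finset.card_range]

set_option maxHeartbeats 1000000 in
theorem stmt_15 {n : ℕ} (s e : Fin n → ℝ) (hse : ∀ i, s i < e i)
    (W : ℕ) (hW : 1 ≤ W) (rmax : Fin n → ℕ) (hrmax : ∀ i, rmax i ≤ W)
    (p : Fin n → ℝ) (hp : ∀ i, 1 ≤ p i)
    (ε : ℝ) (hε0 : 0 < ε) (hε1 : ε < 1) (hWε : 1 / ε ^ 2 ≤ (W : ℝ))
    (β : ℝ) (hβ0 : 0 < β) (hβ1 : β < 1)
    (c : Fin n → Finset (Fin W)) (hc : IsContigColoring W s e rmax c)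
    (P : ℝ) (hP : colProfit p c = P)
    (hwideprofit :
      ∑ i ∈ Finset.univ.filter (fun i => ε * W ≤ (rmax i : ℝ)),
        p i * (((c i).card - ⌈ε * (W : ℝ)⌉₊ : ℕ) : ℝ) ≤ β * P) :
    ∃ x y : Fin n → ℕ,
      (∀ i, x i ≤ min (rmax i) ⌈ε * (W : ℝ)⌉₊) ∧
      (∀ i, ¬ (ε * W ≤ (rmax i : ℝ)) → y i = 0) ∧
      (∀ i, ε * W ≤ (rmax i : ℝ) → y i ≤ rmax i - ⌈ε * (W : ℝ)⌉₊) ∧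
      (∑ i ∈ Finset.univ.filter (fun i => ε * W ≤ (rmax i : ℝ)),
        p i * (y i : ℝ)) ≤ β * (1 - ε) * P ∧
      (∀ t : ℝ,
        (∑ i ∈ Finset.univ.filter (fun i => s i ≤ t ∧ t < e i),
          ((x i : ℝ) + (y i : ℝ))) ≤ (1 - ε) * W) ∧
      (1 - 2 * ε) * P ≤ ∑ i, p i * ((x i : ℝ) + (y i : ℝ)) := by
  classical
  haveI : NeZero W := ⟨by omega⟩
  have hW1 : (1 : ℝ) ≤ (W : ℝ) := by exact_mod_cast hW
  have hWpos : (0 : ℝ) < (W : ℝ) := by linarith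
  set K : ℕ := ⌈ε * (W : ℝ)⌉₊ with hKdef
  have hεWK : ε * W ≤ (K : ℝ) := Nat.le_ceil _
  have hKW : K ≤ W := by
    rw [hKdef]
    refine Nat.ceil_le.mpr ?_
    nlinarith
  have hε2W : (1 : ℝ) ≤ ε ^ 2 * (W : ℝ) := by
    rw [div_le_iff₀ (by positivity)] at hWε
    linarith
  have hKub : (K : ℝ) ≤ ε * W + 1 := (Nat.ceil_lt_add_one (by positivity)).le
  have hεK : (1 : ℝ) ≤ ε * K := by nlinarith
  have hPnn : 0 ≤ P := by
    rw [← hP, colProfit]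
    exact Finset.sum_nonneg fun i _ =>
      mul_nonneg (le_trans zero_le_one (hp i)) (by positivity)
  -- cyclic strips of width K
  set S : Fin W → Finset (Fin W) :=
    fun j => Finset.univ.filter (fun u => ((u - j : Fin W) : ℕ) < K) with hSdef
  have hScard : ∀ j, (S j).card = K := by
    intro j
    have h : (fun u : Fin W => ((u - j : Fin W) : ℕ) < K)
        = (fun u : Fin W => ((Equiv.subRight j u : Fin W) : ℕ) < K) := rfl
    rw [hSdef]
    simp only [h]
    rw [card_filter_equiv (Equiv.subRight j) (fun v : Fin W => (v : ℕ) < K)]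
    exact card_filter_val_lt hKW
  have hcount : ∀ u : Fin W,
      (Finset.univ.filter (fun j => u ∈ S j)).card = K := by
    intro u
    have h : Finset.univ.filter (fun j : Fin W => u ∈ S j)
        = Finset.univ.filter
            (fun j : Fin W => ((Equiv.subLeft u j : Fin W) : ℕ) < K) := by
      refine Finset.filter_congr ?_
      intro j _
      simp [hSdef, Equiv.subLeft_apply]
    rw [h, card_filter_equiv (Equiv.subLeft u) (fun v : Fin W => (v : ℕ) < K)]
    exact card_filter_val_lt hKW
  have hdouble : ∀ i, ∑ j : Fin W, (c i ∩ S j).card = (c i).card * K := by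
    intro i
    have h1 : ∀ j, (c i ∩ S j).card = ∑ u ∈ c i, if u ∈ S j then 1 else 0 := by
      intro j
      have he : (c i).filter (fun u => u ∈ S j) = c i ∩ S j := by
        ext u
        simp [Finset.mem_filter, Finset.mem_inter]
      rw [← he, Finset.card_filter]
    calc ∑ j : Fin W, (c i ∩ S j).card
        = ∑ j : Fin W, ∑ u ∈ c i, if u ∈ S j then 1 else 0 := by
          exact Finset.sum_congr rfl fun j _ => h1 j
      _ = ∑ u ∈ c i, ∑ j : Fin W, if u ∈ S j then 1 else 0 := Finset.sum_comm
      _ = ∑ u ∈ c i, K := by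
          refine Finset.sum_congr rfl fun u _ => ?_
          rw [← Finset.card_filter]
          exact hcount u
      _ = (c i).card * K := by
          rw [Finset.sum_const, smul_eq_mul]
  set Af : Fin W → ℝ := fun j => ∑ i, p i * ((c i ∩ S j).card : ℝ) with hAfdef
  have hAsum : ∑ j : Fin W, Af j = (K : ℝ) * P := by
    calc ∑ j : Fin W, Af j
        = ∑ j : Fin W, ∑ i, p i * ((c i ∩ S j).card : ℝ) := rfl
      _ = ∑ i, ∑ j : Fin W, p i * ((c i ∩ S j).card : ℝ) := Finset.sum_comm
      _ = ∑ i, p i * (((c i).card : ℝ) * K) := by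
          refine Finset.sum_congr rfl fun i _ => ?_
          rw [← Finset.mul_sum]
          congr 1
          rw [← Nat.cast_sum, hdouble i]
          push_cast
          ring
      _ = (K : ℝ) * ∑ i, p i * ((c i).card : ℝ) := by
          rw [Finset.mul_sum]
          exact Finset.sum_congr rfl fun i _ => by ring
      _ = (K : ℝ) * P := by rw [← hP]; rfl
  obtain ⟨j₀, -, hj₀⟩ : ∃ j ∈ (Finset.univ : Finset (Fin W)),
      Af j ≤ (K : ℝ) * P / W := by
    refine Finset.exists_le_of_sum_le Finset.univ_nonempty ?_
    rw [hAsum, Finset.sum_const, Finset.card_univ, Fintype.card_fin, nsmul_eq_mul]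
    have hfs : (W : ℝ) * ((K : ℝ) * P / W) = (K : ℝ) * P := by
      field_simp
    rw [hfs]
  set q : Fin n → ℕ := fun i => (c i \ S j₀).card with hqdef
  set val : Fin n → ℕ := fun i => q i - ⌊ε * (q i : ℝ)⌋₊ with hvaldef
  have hfl : ∀ i, ⌊ε * (q i : ℝ)⌋₊ ≤ q i := by
    intro i
    have h0 : (0 : ℝ) ≤ ε * q i := mul_nonneg hε0.le (Nat.cast_nonneg _)
    have h1 := Nat.floor_le h0
    have hq0 : (0 : ℝ) ≤ (q i : ℝ) := Nat.cast_nonneg _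
    have h2 : (⌊ε * (q i : ℝ)⌋₊ : ℝ) ≤ (q i : ℝ) := by
      nlinarith [mul_nonneg (show (0:ℝ) ≤ 1 - ε by linarith) hq0]
    exact_mod_cast h2
  have hvq : ∀ i, val i ≤ q i := fun i => Nat.sub_le _ _
  have hqm : ∀ i, q i ≤ (c i).card := fun i => Finset.card_le_card Finset.sdiff_subset
  have hmr : ∀ i, (c i).card ≤ rmax i := hc.2.1
  have hvcast : ∀ i, (val i : ℝ) = (q i : ℝ) - (⌊ε * (q i : ℝ)⌋₊ : ℝ) := by
    intro i
    rw [hvaldef]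
    push_cast [hfl i]
    ring
  have hvlb : ∀ i, (1 - ε) * (q i : ℝ) ≤ (val i : ℝ) := by
    intro i
    rw [hvcast i]
    have h1 := Nat.floor_le (show (0 : ℝ) ≤ ε * q i from mul_nonneg hε0.le (Nat.cast_nonneg _))
    nlinarith
  have hvub : ∀ i, (val i : ℝ) ≤ (1 - ε) * (q i : ℝ) + 1 := by
    intro i
    rw [hvcast i]
    have h1 := Nat.lt_floor_add_one (ε * (q i : ℝ))
    nlinarith
  have hxyval : ∀ i : Fin n,
      ((min (val i) K : ℕ) : ℝ) + ((val i - K : ℕ) : ℝ) = (val i : ℝ) := by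
    intro i
    have h : min (val i) K + (val i - K) = val i := by omega
    exact_mod_cast congrArg (fun m : ℕ => (m : ℝ)) h
  refine ⟨fun i => min (val i) K, fun i => val i - K, ?_, ?_, ?_, ?_, ?_, ?_⟩
  · intro i
    exact min_le_min (le_trans (hvq i) (le_trans (hqm i) (hmr i))) le_rfl
  · intro i hn
    have h1 : (rmax i : ℝ) < ε * W := not_le.mp hn
    have h2 : (rmax i : ℝ) < (K : ℝ) := lt_of_lt_of_le h1 hεWK
    have h3 : rmax i < K := by exact_mod_cast h2
    have h4 := le_trans (hvq i) (le_trans (hqm i) (hmr i))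
    show val i - K = 0
    omega
  · intro i _
    exact Nat.sub_le_sub_right (le_trans (hvq i) (le_trans (hqm i) (hmr i))) K
  · -- wide profit bound (1)
    have key : ∀ i ∈ Finset.univ.filter (fun i => ε * W ≤ (rmax i : ℝ)),
        p i * ((val i - K : ℕ) : ℝ)
          ≤ (1 - ε) * (p i * (((c i).card - K : ℕ) : ℝ)) := by
      intro i _
      have hpnn : (0 : ℝ) ≤ p i := le_trans zero_le_one (hp i)
      rcases le_or_gt (val i) K with h | h
      · rw [Nat.sub_eq_zero_of_le h]
        have : (0 : ℝ) ≤ (1 - ε) * (p i * (((c i).card - K : ℕ) : ℝ)) := by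
          apply mul_nonneg (by linarith)
          exact mul_nonneg hpnn (Nat.cast_nonneg _)
        simpa using this
      · have hKm : K < (c i).card := lt_of_lt_of_le h (le_trans (hvq i) (hqm i))
        have e1 : ((val i - K : ℕ) : ℝ) = (val i : ℝ) - K := by
          push_cast [le_of_lt h]; ring
        have e2 : (((c i).card - K : ℕ) : ℝ) = ((c i).card : ℝ) - K := by
          push_cast [le_of_lt hKm]; ring
        have hq' : (q i : ℝ) ≤ ((c i).card : ℝ) := by exact_mod_cast hqm i
        have hub := hvub i
        rw [e1, e2]
        have hmono : (1 - ε) * (q i : ℝ) ≤ (1 - ε) * ((c i).card : ℝ) :=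
          mul_le_mul_of_nonneg_left hq' (by linarith)
        have hle : (val i : ℝ) - K ≤ (1 - ε) * (((c i).card : ℝ) - K) := by
          nlinarith [hεK, hub, hmono]
        calc p i * ((val i : ℝ) - K)
            ≤ p i * ((1 - ε) * (((c i).card : ℝ) - K)) :=
              mul_le_mul_of_nonneg_left hle hpnn
          _ = (1 - ε) * (p i * (((c i).card : ℝ) - K)) := by ring
    calc ∑ i ∈ Finset.univ.filter (fun i => ε * W ≤ (rmax i : ℝ)),
          p i * ((val i - K : ℕ) : ℝ)
        ≤ ∑ i ∈ Finset.univ.filter (fun i => ε * W ≤ (rmax i : ℝ)),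
          (1 - ε) * (p i * (((c i).card - K : ℕ) : ℝ)) := Finset.sum_le_sum key
      _ = (1 - ε) * ∑ i ∈ Finset.univ.filter (fun i => ε * W ≤ (rmax i : ℝ)),
          p i * (((c i).card - K : ℕ) : ℝ) := by rw [← Finset.mul_sum]
      _ ≤ (1 - ε) * (β * P) :=
          mul_le_mul_of_nonneg_left hwideprofit (by linarith)
      _ = β * (1 - ε) * P := by ring
  · -- capacity bound (2)
    intro t
    have hdisj : ∀ i ∈ Finset.univ.filter (fun i => s i ≤ t ∧ t < e i),
        ∀ i' ∈ Finset.univ.filter (fun i => s i ≤ t ∧ t < e i),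
        i ≠ i' → Disjoint (c i \ S j₀) (c i' \ S j₀) := by
      intro i hi i' hi' hne
      simp only [Finset.mem_filter, Finset.mem_univ, true_and] at hi hi'
      have hov : Overlap s e i i' :=
        ⟨hne, ⟨t, ⟨⟨hi.1, hi.2⟩, ⟨hi'.1, hi'.2⟩⟩⟩⟩
      have h0 := hc.2.2 i i' hov
      refine Finset.disjoint_left.mpr ?_
      intro a ha ha'
      have hmem : a ∈ c i ∩ c i' :=
        Finset.mem_inter.mpr ⟨(Finset.mem_sdiff.mp ha).1, (Finset.mem_sdiff.mp ha').1⟩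
      rw [h0] at hmem
      exact absurd hmem (Finset.notMem_empty a)
    have hnat : ∑ i ∈ Finset.univ.filter (fun i => s i ≤ t ∧ t < e i), val i
        ≤ W - K := by
      calc ∑ i ∈ Finset.univ.filter (fun i => s i ≤ t ∧ t < e i), val i
          ≤ ∑ i ∈ Finset.univ.filter (fun i => s i ≤ t ∧ t < e i), q i :=
            Finset.sum_le_sum fun i _ => hvq i
        _ = ((Finset.univ.filter (fun i => s i ≤ t ∧ t < e i)).biUnion
              (fun i => c i \ S j₀)).card := (Finset.card_biUnion hdisj).symm
        _ ≤ ((Finset.univ : Finset (Fin W)) \ S j₀).card := by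
            apply Finset.card_le_card
            intro u hu
            rw [Finset.mem_biUnion] at hu
            obtain ⟨i, -, hu⟩ := hu
            rw [Finset.mem_sdiff] at hu ⊢
            exact ⟨Finset.mem_univ u, hu.2⟩
        _ = W - K := by
            rw [Finset.card_sdiff_of_subset (Finset.subset_univ _), Finset.card_univ,
              Fintype.card_fin, hScard j₀]
    have hcast : ((∑ i ∈ Finset.univ.filter (fun i => s i ≤ t ∧ t < e i), val i : ℕ) : ℝ)
        ≤ ((W - K : ℕ) : ℝ) := by exact_mod_cast hnat
    have hWK : ((W - K : ℕ) : ℝ) = (W : ℝ) - (K : ℝ) := by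
      push_cast [hKW]; ring
    calc ∑ i ∈ Finset.univ.filter (fun i => s i ≤ t ∧ t < e i),
          (((min (val i) K : ℕ) : ℝ) + ((val i - K : ℕ) : ℝ))
        = ∑ i ∈ Finset.univ.filter (fun i => s i ≤ t ∧ t < e i), (val i : ℝ) :=
          Finset.sum_congr rfl fun i _ => hxyval i
      _ = ((∑ i ∈ Finset.univ.filter (fun i => s i ≤ t ∧ t < e i), val i : ℕ) : ℝ) := by
          rw [Nat.cast_sum]
      _ ≤ ((W - K : ℕ) : ℝ) := hcast
      _ = (W : ℝ) - (K : ℝ) := hWK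
      _ ≤ (1 - ε) * W := by linarith [hεWK]
  · -- profit bound (3)
    have hsum1 : ∑ i, p i * (((min (val i) K : ℕ) : ℝ) + ((val i - K : ℕ) : ℝ))
        = ∑ i, p i * (val i : ℝ) :=
      Finset.sum_congr rfl fun i _ => by rw [hxyval i]
    have hqr : ∑ i, p i * (q i : ℝ) = P - Af j₀ := by
      have h1 : ∀ i : Fin n, p i * (q i : ℝ)
          = p i * ((c i).card : ℝ) - p i * ((c i ∩ S j₀).card : ℝ) := by
        intro i
        have hcards : (c i ∩ S j₀).card + (c i \ S j₀).card = (c i).card :=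
          Finset.card_inter_add_card_sdiff _ _
        have h2 : (q i : ℝ) = ((c i).card : ℝ) - ((c i ∩ S j₀).card : ℝ) := by
          rw [hqdef]
          have := congrArg (fun m : ℕ => (m : ℝ)) hcards
          push_cast at this
          linarith
        rw [h2]
        ring
      rw [Finset.sum_congr rfl fun i _ => h1 i, Finset.sum_sub_distrib, ← hP]
      rfl
    have hlow : (1 - ε) * (P - Af j₀) ≤ ∑ i, p i * (val i : ℝ) := by
      calc (1 - ε) * (P - Af j₀) = ∑ i, (1 - ε) * (p i * (q i : ℝ)) := by
            rw [← Finset.mul_sum, hqr]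
        _ = ∑ i, p i * ((1 - ε) * (q i : ℝ)) :=
            Finset.sum_congr rfl fun i _ => by ring
        _ ≤ ∑ i, p i * (val i : ℝ) :=
            Finset.sum_le_sum fun i _ =>
              mul_le_mul_of_nonneg_left (hvlb i) (le_trans zero_le_one (hp i))
    have hAf0 : 0 ≤ Af j₀ :=
      Finset.sum_nonneg fun i _ =>
        mul_nonneg (le_trans zero_le_one (hp i)) (Nat.cast_nonneg _)
    have h1 : Af j₀ * W ≤ (K : ℝ) * P := (le_div_iff₀ hWpos).mp hj₀
    have hA2 : Af j₀ ≤ ε * P + ε ^ 2 * P := by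
      have h4 : Af j₀ * W ≤ (ε * P + ε ^ 2 * P) * W := by
        nlinarith [mul_le_mul_of_nonneg_right hKub hPnn,
          mul_nonneg (sub_nonneg.mpr hε2W) hPnn]
      exact le_of_mul_le_mul_right h4 hWpos
    rw [hsum1]
    have hfinal : (1 - 2 * ε) * P ≤ (1 - ε) * (P - Af j₀) := by
      nlinarith [mul_le_mul_of_nonneg_left hA2 (show (0 : ℝ) ≤ 1 - ε by linarith),
        mul_nonneg (mul_nonneg hε0.le (mul_nonneg hε0.le hε0.le)) hPnn]
    linarith
end
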